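/- arXiv:0911.4351 — 2 statements merged into one kernel-verified Lean document; each statement's English description precedes it below -/
import Mathlib

section
/- There exists an integer d₀ > 0 such that for every ε > 0 and integer d₀ ≤ d ≤ n−1 the following holds: if G is an (n,d,λ)-graph in which every subset U of vertices with |U| ≤ d + d²/ε spans at most |U| edges, then for every subgraph H ⊆ G with Δ(H) ≤ (d−λ)/2 − ε, the graph G − H is (d − Δ(H))-vertex-connected. -/
open SimpleGraph Real
open scoped Classical

variable {V : Type*}

noncomputable def degN (H : SimpleGraph V) (v : V) : ℕ := (H.neighborSet v).ncard

noncomputable def maxDeg (H : SimpleGraph V) : ℕ := sSup (Set.range (degN H))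

noncomputable def minDeg (H : SimpleGraph V) : ℕ := sInf (Set.range (degN H))

noncomputable def localResilience [Fintype V] (G : SimpleGraph V)
    (P : SimpleGraph V → Prop) : ℕ :=
  sInf {r | ∃ H ≤ G, maxDeg H = r ∧ ¬ P (G \ H)}

def EdgeConnK [Fintype V] (G : SimpleGraph V) (k : ℕ) : Prop :=
  ∀ s : Finset (Sym2 V), s.card < k → (G.deleteEdges ↑s).Connected

def VertConnK [Fintype V] (G : SimpleGraph V) (k : ℕ) : Prop :=
  ∀ S : Finset V, S.card < k → (G.induce ((↑S : Set V)ᶜ)).Connected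

def IsReg (G : SimpleGraph V) (d : ℕ) : Prop := ∀ v, degN G v = d

noncomputable def quadForm [Fintype V] (G : SimpleGraph V) (x : V → ℝ) : ℝ :=
  ∑ u, ∑ v, if G.Adj u v then x u * x v else 0

/-- `(n,d,lam)`-graph: `d`-regular and all eigenvalues of the adjacency matrix other
than the top one (i.e. on the orthogonal complement of the all-ones vector) are at
most `lam` in absolute value. -/
def IsNDL [Fintype V] (G : SimpleGraph V) (d : ℕ) (lam : ℝ) : Prop :=
  IsReg G d ∧ ∀ x : V → ℝ, (∑ v, x v) = 0 → |quadForm G x| ≤ lam * ∑ v, (x v) ^ 2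

noncomputable def edgesWithin (G : SimpleGraph V) (U : Set V) : ℕ :=
  {e ∈ G.edgeSet | ∀ v ∈ e, v ∈ U}.ncard

noncomputable def edgesBetween (G : SimpleGraph V) (U W : Set V) : ℕ :=
  {p : V × V | p.1 ∈ U ∧ p.2 ∈ W ∧ G.Adj p.1 p.2}.ncard

def nbhd (G : SimpleGraph V) (S : Set V) : Set V :=
  {v | v ∉ S ∧ ∃ u ∈ S, G.Adj u v}

noncomputable def maxPathLength (G : SimpleGraph V) : ℕ :=
  sSup {n | ∃ (u v : V) (p : G.Walk u v), p.IsPath ∧ p.length = n}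

def Booster [Fintype V] (G : SimpleGraph V) (u v : V) : Prop :=
  u ≠ v ∧ ¬ G.Adj u v ∧
    ((G ⊔ fromEdgeSet {s(u, v)}).IsHamiltonian ∨
      maxPathLength G < maxPathLength (G ⊔ fromEdgeSet {s(u, v)}))

def BSet [Fintype V] (G : SimpleGraph V) (v : V) : Set V := {w | Booster G v w}

def boosterSet [Fintype V] (G : SimpleGraph V) : Set (Sym2 V) :=
  {e | ∃ u v, e = s(u, v) ∧ Booster G u v}

def IsExpander [Fintype V] (G : SimpleGraph V) (ε : ℝ) : Prop :=
  (∀ S : Set V, (S.ncard : ℝ) < ε * (Fintype.card V) →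
      10 * S.ncard ≤ (nbhd G S).ncard) ∧
  (∀ S : Set V, ε * (Fintype.card V) ≤ (S.ncard : ℝ) →
      (S.ncard : ℝ) ≤ 2 * ε * (Fintype.card V) →
      (1 + 12 * ε) * (Fintype.card V) / 2 ≤ ((nbhd G S).ncard : ℝ))

def IsMagnifier (G : SimpleGraph V) (k ℓ : ℝ) : Prop :=
  ∀ U : Set V, (U.ncard : ℝ) ≤ k → ℓ * U.ncard ≤ ((nbhd G U).ncard : ℝ)

def QuasiRandom [Fintype V] (G : SimpleGraph V) (d : ℕ) (ε : ℝ) : Prop :=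
  ((d : ℝ) / 2 ≤ (minDeg G : ℝ) ∧ (maxDeg G : ℝ) ≤ 2 * d) ∧
  (∀ U : Set V, (U.ncard : ℝ) < ε ^ 3 * (Fintype.card V) / 14 →
      (edgesWithin G U : ℝ) ≤ ε ^ 3 * d * U.ncard / 14) ∧
  (∀ U W : Set V, Disjoint U W →
      ε ^ 3 / 160 * (Fintype.card V) ≤ (U.ncard : ℝ) →
      (U.ncard : ℝ) < 2 * (ε ^ 3 / 160) * (Fintype.card V) →
      (Fintype.card V : ℝ) / 2 * (1 - ε / 2 - 4 * (ε ^ 3 / 160)) ≤ (W.ncard : ℝ) →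
      (d : ℝ) * (1 - ε / 4) / (Fintype.card V) * (U.ncard * W.ncard)
          - (1 - ε) * (d : ℝ) / 2 * U.ncard ≤ (edgesBetween G U W : ℝ))

def bipartiteBetween (G : SimpleGraph V) (S : Set V) : SimpleGraph V where
  Adj u v := G.Adj u v ∧ ((u ∈ S ∧ v ∉ S) ∨ (u ∉ S ∧ v ∈ S))
  symm := by
    constructor
    intro u v h
    exact ⟨h.1.symm, h.2.elim (fun hh => Or.inr ⟨hh.2, hh.1⟩) (fun hh => Or.inl ⟨hh.2, hh.1⟩)⟩
  loopless := by
    constructor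
    intro v h
    exact G.irrefl h.1

def LegalStrategy [Fintype V] (G : SimpleGraph V)
    (σ : Finset (Sym2 V) × Finset (Sym2 V) → Sym2 V) : Prop :=
  ∀ s : Finset (Sym2 V) × Finset (Sym2 V),
    (∃ e ∈ G.edgeSet, e ∉ s.1 ∧ e ∉ s.2) →
    σ s ∈ G.edgeSet ∧ σ s ∉ s.1 ∧ σ s ∉ s.2

def playMB [DecidableEq V]
    (σ τ : Finset (Sym2 V) × Finset (Sym2 V) → Sym2 V) :
    ℕ → Finset (Sym2 V) × Finset (Sym2 V)
  | 0 => (∅, ∅)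
  | n + 1 =>
      let p := playMB σ τ n
      let q : Finset (Sym2 V) × Finset (Sym2 V) := (p.1, insert (τ p) p.2)
      (insert (σ q) q.1, q.2)

/-!
Suppose that deleting a set `S` with `|S| < d - Δ(H)` disconnects `G - H`, and let `A` be the
smaller side of the separation, `B` the larger one, `n = |A| + |B| + |S|`.

If `|A| > d²/ε`, the expander mixing lemma gives at least about `(d - λ)|A||B|/n` edges of `G`
between `A` and `B`. All of them lie in `H`, so there are at most `Δ(H)|A|` of them, and
`Δ(H) ≤ (d - λ)/2 - ε` makes the two bounds incompatible.

If `|A| ≤ d²/ε`, every vertex of `A` has at least `d - Δ(H) > |S|` neighbours in `A ∪ S`. Since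
`|A ∪ S| ≤ d + d²/ε`, the density hypothesis applies to `A` and to `A ∪ S`, and the edges they
span are too few to carry these degrees.

The mixing lemma is used in the form
`|e(A, B) - d|A||B|/n| ≤ (λ/2)(|A|(n - |A|) + |B|(n - |B|))/n`, obtained by polarizing the
quadratic-form bound at the centred indicator vectors of `A` and `B`; this avoids square roots.
-/

open Finset Matrix

section Degrees

variable [Fintype V]

lemma degN_eq_degree (G : SimpleGraph V) (v : V) : degN G v = G.degree v := by
  simp only [degN, ← coe_neighborFinset, Set.ncard_coe_finset, card_neighborFinset_eq_degree]

lemma IsReg.isRegularOfDegree {G : SimpleGraph V} {d : ℕ} (h : IsReg G d) :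
    G.IsRegularOfDegree d := fun v => degN_eq_degree G v ▸ h v

lemma degree_le_maxDeg (H : SimpleGraph V) (v : V) : H.degree v ≤ maxDeg H :=
  degN_eq_degree H v ▸ le_csSup (Set.finite_range _).bddAbove (Set.mem_range_self v)

lemma degree_le_degree_sdiff_add (G H : SimpleGraph V) (v : V) :
    G.degree v ≤ (G \ H).degree v + H.degree v := by
  simp only [← card_neighborFinset_eq_degree]
  refine (card_le_card fun w hw => ?_).trans (card_union_le _ _)
  by_cases h : H.Adj v w <;> simp_all [mem_neighborFinset]

lemma SimpleGraph.IsRegularOfDegree.sub_maxDeg_le_degree_sdiff {G : SimpleGraph V} {d : ℕ}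
    (hreg : G.IsRegularOfDegree d) (H : SimpleGraph V) (v : V) :
    d - maxDeg H ≤ (G \ H).degree v := by
  have := degree_le_degree_sdiff_add G H v
  have := degree_le_maxDeg H v
  rw [hreg v] at *
  omega

end Degrees

namespace SimpleGraph

variable (G : SimpleGraph V) [DecidableRel G.Adj] (s t t' : Finset V)

lemma card_interedges_eq_sum : #(G.interedges s t) = ∑ a ∈ s, #{b ∈ t | G.Adj a b} := by
  rw [interedges_def, card_filter, sum_product]
  simp only [card_filter]

lemma card_interedges_comm : #(G.interedges s t) = #(G.interedges t s) :=
  @Rel.card_interedges_comm _ _ _ G.symm s t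

lemma card_interedges_le_sum_degree [Fintype V] :
    #(G.interedges s t) ≤ ∑ a ∈ s, G.degree a := by
  rw [card_interedges_eq_sum]
  refine sum_le_sum fun a _ => ?_
  rw [← card_neighborFinset_eq_degree]
  exact card_le_card fun b hb => by simp_all [mem_neighborFinset]

lemma card_interedges_union_right (h : Disjoint t t') :
    #(G.interedges s (t ∪ t')) = #(G.interedges s t) + #(G.interedges s t') := by
  rw [← card_union_of_disjoint (G.interedges_disjoint_right s h)]
  congr 1
  ext ⟨a, b⟩
  simp only [mem_interedges_iff, mem_union]
  tauto

lemma card_interedges_union_left (h : Disjoint t t') :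
    #(G.interedges (t ∪ t') s) = #(G.interedges t s) + #(G.interedges t' s) := by
  rw [card_interedges_comm, card_interedges_union_right G s t t' h, card_interedges_comm,
    card_interedges_comm G s t']

lemma card_interedges_self_eq_two_mul_edgesWithin [Fintype V] :
    #(G.interedges s s) = 2 * edgesWithin G ↑s := by
  set K := fromEdgeSet {e ∈ G.edgeSet | ∀ v ∈ e, v ∈ (↑s : Set V)}
  have hK : ∀ u v, K.Adj u v ↔ G.Adj u v ∧ u ∈ s ∧ v ∈ s := by
    intro u v
    simp only [K, fromEdgeSet_adj, Set.mem_ofPred_eq, mem_edgeSet, Sym2.mem_iff, forall_eq_or_imp,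
      forall_eq]
    exact ⟨fun ⟨h, _⟩ => h, fun h => ⟨h, h.1.ne⟩⟩
  have hedges : K.edgeSet = {e ∈ G.edgeSet | ∀ v ∈ e, v ∈ (↑s : Set V)} := by
    ext e
    simp only [K, edgeSet_fromEdgeSet, Set.mem_sdiff, Sym2.mem_diagSet, and_iff_left_iff_imp]
    exact fun h => G.not_isDiag_of_mem_edgeSet h.1
  calc #(G.interedges s s) = #(K.interedges univ univ) := by
        congr 1; ext ⟨u, v⟩; simp [mem_interedges_iff, hK, and_comm, and_assoc]
    _ = ∑ v, K.degree v := by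
        rw [card_interedges_eq_sum]
        simp [← card_neighborFinset_eq_degree, neighborFinset_eq_filter]
    _ = 2 * edgesWithin G ↑s := by
        rw [sum_degrees_eq_twice_card_edges, edgesWithin]
        congr 1
        rw [← Set.ncard_coe_finset, coe_edgeFinset, hedges]

end SimpleGraph

section Sparse

variable [Fintype V]

lemma exists_card_lt_edgesWithin {G K : SimpleGraph V} [DecidableRel K.Adj] (hKG : K ≤ G)
    {δ : ℕ} (hdeg : ∀ v, δ ≤ K.degree v) (hδ : 4 ≤ δ) {A S : Finset V} (hA : A.Nonempty)
    (hAS : Disjoint A S) (hS : #S < δ) (hN : ∀ a ∈ A, ∀ b, K.Adj a b → b ∈ A ∪ S) :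
    ∃ U ⊆ A ∪ S, #U < edgesWithin G ↑U := by
  have hsum : #A * δ ≤ #(G.interedges A A) + #(G.interedges A S) := by
    calc #A * δ ≤ ∑ a ∈ A, K.degree a := by
          rw [← smul_eq_mul]; exact card_nsmul_le_sum _ _ _ fun a _ => hdeg a
      _ ≤ ∑ a ∈ A, #{b ∈ A ∪ S | G.Adj a b} := by
          refine sum_le_sum fun a ha => card_le_card fun b hb => ?_
          rw [mem_neighborFinset] at hb
          exact mem_filter.2 ⟨hN a ha b hb, hKG hb⟩
      _ = _ := by rw [← card_interedges_eq_sum, card_interedges_union_right G _ _ _ hAS]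
  obtain hA1 | hA2 := (one_le_card.2 hA).eq_or_lt'
  · obtain ⟨a, rfl⟩ := card_eq_one.1 hA1
    have hloop : G.interedges {a} {a} = ∅ := eq_empty_of_forall_notMem fun p hp => by
      obtain ⟨h₁, h₂, hadj⟩ := G.mem_interedges_iff.1 hp
      rw [mem_singleton] at h₁ h₂
      exact G.irrefl (h₁ ▸ h₂ ▸ hadj)
    have := G.card_interedges_le_mul {a} S
    simp only [hloop, card_empty, card_singleton] at hsum this
    omega
  by_contra! hsparse
  have hAA : #(G.interedges A A) ≤ 2 * #A := by
    rw [card_interedges_self_eq_two_mul_edgesWithin]; simpa using hsparse A subset_union_left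
  have hAS : #(G.interedges A A) + 2 * #(G.interedges A S) ≤ 2 * (#A + #S) := by
    have h := hsparse (A ∪ S) subset_rfl
    rw [card_union_of_disjoint hAS, ← Nat.mul_le_mul_left_iff two_pos,
      ← card_interedges_self_eq_two_mul_edgesWithin, card_interedges_union_left _ _ _ _ hAS,
      card_interedges_union_right _ _ _ _ hAS, card_interedges_union_right _ _ _ _ hAS,
      card_interedges_comm G S A] at h
    omega
  -- now `2|A|δ ≤ 4|A| + 2|S| < 4|A| + 2δ`, impossible for `|A| ≥ 2` and `δ ≥ 4`
  nlinarith

end Sparse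

section Mixing

variable [Fintype V]

lemma quadForm_eq_dotProduct_mulVec (G : SimpleGraph V) (x : V → ℝ) :
    quadForm G x = x ⬝ᵥ G.adjMatrix ℝ *ᵥ x := by
  simp [quadForm, dotProduct, mulVec, adjMatrix_apply, mul_sum]

lemma indicator_dotProduct (s : Finset V) (w : V → ℝ) :
    (↑s : Set V).indicator 1 ⬝ᵥ w = ∑ v ∈ s, w v := by
  simp [dotProduct, Set.indicator_apply, sum_ite_mem]

lemma indicator_dotProduct_adjMatrix_mulVec (G : SimpleGraph V) [DecidableRel G.Adj]
    (s t : Finset V) :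
    (↑s : Set V).indicator 1 ⬝ᵥ G.adjMatrix ℝ *ᵥ (↑t : Set V).indicator 1 =
      #(G.interedges s t) := by
  simp [indicator_dotProduct, G.card_interedges_eq_sum, Set.indicator_apply,
    neighborFinset_eq_filter, filter_inter]

lemma dotProduct_mulVec_comm_of_isSymm {M : Matrix V V ℝ} (hM : M.IsSymm) (x y : V → ℝ) :
    y ⬝ᵥ M *ᵥ x = x ⬝ᵥ M *ᵥ y := by
  rw [dotProduct_mulVec, ← mulVec_transpose, hM.eq, dotProduct_comm]

lemma abs_dotProduct_mulVec_le_of_isSymm {M : Matrix V V ℝ} (hM : M.IsSymm) {lam : ℝ}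
    (hlam : ∀ x : V → ℝ, ∑ v, x v = 0 → |x ⬝ᵥ M *ᵥ x| ≤ lam * (x ⬝ᵥ x))
    {x y : V → ℝ} (hx : ∑ v, x v = 0) (hy : ∑ v, y v = 0) :
    |x ⬝ᵥ M *ᵥ y| ≤ lam / 2 * (x ⬝ᵥ x + y ⬝ᵥ y) := by
  have hMsymm := dotProduct_mulVec_comm_of_isSymm hM x y
  have hcomm := dotProduct_comm x y
  -- polarization: 4 x ⬝ᵥ M *ᵥ y = (x + y) ⬝ᵥ M *ᵥ (x + y) - (x - y) ⬝ᵥ M *ᵥ (x - y)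
  have hadd := abs_le.1 <| hlam (x + y) (by simp [sum_add_distrib, hx, hy])
  have hsub := abs_le.1 <| hlam (x - y) (by simp [sum_sub_distrib, hx, hy])
  simp only [add_dotProduct, dotProduct_add, sub_dotProduct, dotProduct_sub, mulVec_add,
    mulVec_sub] at hadd hsub
  rw [abs_le]
  constructor <;> linarith

lemma nonneg_of_abs_dotProduct_mulVec_le [Nontrivial V] {M : Matrix V V ℝ} {lam : ℝ}
    (hlam : ∀ x : V → ℝ, ∑ v, x v = 0 → |x ⬝ᵥ M *ᵥ x| ≤ lam * (x ⬝ᵥ x)) : 0 ≤ lam := by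
  obtain ⟨u, w, huw⟩ := exists_pair_ne V
  set x : V → ℝ := Pi.single u 1 - Pi.single w 1
  have hx : x ⬝ᵥ x = 2 := by simp [x, huw, huw.symm, one_add_one_eq_two]
  have h := hlam x (by simp [x, sum_sub_distrib])
  rw [hx] at h
  linarith [abs_nonneg (x ⬝ᵥ M *ᵥ x)]

lemma IsNDL.abs_dotProduct_adjMatrix_mulVec_le {G : SimpleGraph V} {d : ℕ} {lam : ℝ}
    (h : IsNDL G d lam) (x : V → ℝ) (hx : ∑ v, x v = 0) :
    |x ⬝ᵥ G.adjMatrix ℝ *ᵥ x| ≤ lam * (x ⬝ᵥ x) := by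
  have hsq : ∑ v, x v ^ 2 = x ⬝ᵥ x := by simp only [dotProduct, sq]
  simpa only [quadForm_eq_dotProduct_mulVec, hsq] using h.2 x hx

noncomputable def centeredIndicator (s : Finset V) : V → ℝ :=
  (↑s : Set V).indicator 1 - (#s / Fintype.card V : ℝ) • 1

lemma indicator_dotProduct_indicator (s : Finset V) :
    (↑s : Set V).indicator 1 ⬝ᵥ (↑s : Set V).indicator (1 : V → ℝ) = #s := by
  rw [indicator_dotProduct, sum_congr rfl fun v hv => Set.indicator_of_mem (mem_coe.2 hv) _]
  simp

lemma indicator_dotProduct_one (s : Finset V) : (↑s : Set V).indicator 1 ⬝ᵥ (1 : V → ℝ) = #s := by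
  simp [indicator_dotProduct]

lemma one_dotProduct_indicator (s : Finset V) : (1 : V → ℝ) ⬝ᵥ (↑s : Set V).indicator 1 = #s := by
  rw [dotProduct_comm, indicator_dotProduct_one]

variable [Nonempty V]

lemma sum_centeredIndicator (s : Finset V) : ∑ v, centeredIndicator s v = 0 := by
  rw [← dotProduct_one]
  simp [centeredIndicator, sub_dotProduct, indicator_dotProduct]

lemma centeredIndicator_dotProduct_self (s : Finset V) :
    centeredIndicator s ⬝ᵥ centeredIndicator s = #s * (Fintype.card V - #s) / Fintype.card V := by
  have hn : (Fintype.card V : ℝ) ≠ 0 := Nat.cast_ne_zero.2 Fintype.card_ne_zero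
  have h11 : (1 : V → ℝ) ⬝ᵥ 1 = Fintype.card V := by simp [dotProduct_one]
  simp only [centeredIndicator, sub_dotProduct, dotProduct_sub, smul_dotProduct, dotProduct_smul,
    indicator_dotProduct_indicator, indicator_dotProduct_one, one_dotProduct_indicator, h11,
    smul_eq_mul]
  field_simp
  ring

lemma centeredIndicator_dotProduct_adjMatrix_mulVec {G : SimpleGraph V} [DecidableRel G.Adj]
    {d : ℕ} (hreg : G.IsRegularOfDegree d) (s t : Finset V) :
    centeredIndicator s ⬝ᵥ G.adjMatrix ℝ *ᵥ centeredIndicator t =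
      #(G.interedges s t) - d * #s * #t / Fintype.card V := by
  have hn : (Fintype.card V : ℝ) ≠ 0 := Nat.cast_ne_zero.2 Fintype.card_ne_zero
  have h11 : (1 : V → ℝ) ⬝ᵥ 1 = Fintype.card V := by simp [dotProduct_one]
  have hM1 : G.adjMatrix ℝ *ᵥ 1 = (d : ℝ) • 1 := by
    ext v; simp [hreg v]
  have h1M : (1 : V → ℝ) ⬝ᵥ G.adjMatrix ℝ *ᵥ (↑t : Set V).indicator 1 = d * #t := by
    rw [← dotProduct_mulVec_comm_of_isSymm G.isSymm_adjMatrix, hM1, dotProduct_smul,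
      indicator_dotProduct_one, smul_eq_mul]
  simp only [centeredIndicator, mulVec_sub, mulVec_smul, hM1, sub_dotProduct, dotProduct_sub,
    smul_dotProduct, dotProduct_smul, indicator_dotProduct_adjMatrix_mulVec,
    indicator_dotProduct_one, h1M, h11, smul_eq_mul]
  field_simp
  ring

theorem abs_card_interedges_sub_le {G : SimpleGraph V} [DecidableRel G.Adj] {d : ℕ} {lam : ℝ}
    (hreg : G.IsRegularOfDegree d)
    (hlam : ∀ x : V → ℝ, ∑ v, x v = 0 → |x ⬝ᵥ G.adjMatrix ℝ *ᵥ x| ≤ lam * (x ⬝ᵥ x))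
    (s t : Finset V) :
    |(#(G.interedges s t) : ℝ) - d * #s * #t / Fintype.card V| ≤
      lam / 2 * ((#s * (Fintype.card V - #s) + #t * (Fintype.card V - #t)) / Fintype.card V) := by
  have h := abs_dotProduct_mulVec_le_of_isSymm G.isSymm_adjMatrix hlam (sum_centeredIndicator s)
    (sum_centeredIndicator t)
  rwa [centeredIndicator_dotProduct_adjMatrix_mulVec hreg, centeredIndicator_dotProduct_self,
    centeredIndicator_dotProduct_self, ← add_div] at h

end Mixing

lemma le_sq_div_of_abs_sub_le {d lam ε Δ e α β σ n : ℝ} (hε : 0 < ε) (hΔ₀ : 0 ≤ Δ)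
    (hΔ : Δ ≤ (d - lam) / 2 - ε) (hσ₀ : 0 ≤ σ) (hσ : σ < d) (hα : 0 ≤ α) (hαβ : α ≤ β)
    (hn : n = α + β + σ) (he : e ≤ α * Δ)
    (hmix : |e - d * α * β / n| ≤ lam / 2 * ((α * (n - α) + β * (n - β)) / n)) :
    α ≤ d ^ 2 / ε := by
  by_contra! hα'
  rw [div_lt_iff₀ hε] at hα'
  have hn₀ : 0 < n := by nlinarith
  have hlow : d * α * β - lam / 2 * (α * (n - α) + β * (n - β)) ≤ α * Δ * n := by
    have h : (d * α * β - lam / 2 * (α * (n - α) + β * (n - β))) / n ≤ e := by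
      rw [sub_div, mul_div_assoc (lam / 2)]; linarith [(abs_le.1 hmix).1]
    rw [div_le_iff₀ hn₀] at h
    linarith [mul_le_mul_of_nonneg_right he hn₀.le]
  subst hn
  have hlam : lam ≤ d := by linarith
  have h₁ : 0 ≤ (d - lam) * α * (β - α) :=
    mul_nonneg (mul_nonneg (sub_nonneg.2 hlam) hα) (sub_nonneg.2 hαβ)
  have h₂ : σ * (d * α + lam * β) ≤ d * d * (α + β + σ) := by
    have hd : 0 ≤ d := by linarith
    have : σ * (lam * β) ≤ σ * (d * β) :=
      mul_le_mul_of_nonneg_left (mul_le_mul_of_nonneg_right hlam (by linarith)) hσ₀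
    nlinarith [mul_le_mul_of_nonneg_right hσ.le (mul_nonneg hd (by linarith) : 0 ≤ d * (α + β)),
      mul_nonneg (mul_nonneg hd hd) hσ₀]
  -- `hlow` and `hΔ` give `(d - λ)α(β - α)/2 + εαn ≤ σ(dα + λβ)/2`, but the right side is
  -- at most `d²n/2 < εαn`
  nlinarith [mul_le_mul_of_nonneg_right hΔ (by positivity : 0 ≤ α * (α + β + σ)),
    mul_lt_mul_of_pos_right hα' hn₀]

section Separation

variable [Fintype V]

structure IsSeparation (K : SimpleGraph V) (S A B : Finset V) : Prop where
  nonempty_left : A.Nonempty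
  nonempty_right : B.Nonempty
  disjoint : Disjoint A B
  union_eq : A ∪ B = Sᶜ
  not_adj : ∀ a ∈ A, ∀ b ∈ B, ¬K.Adj a b

namespace IsSeparation

variable {K : SimpleGraph V} {S A B : Finset V}

lemma symm (h : IsSeparation K S A B) : IsSeparation K S B A :=
  ⟨h.nonempty_right, h.nonempty_left, h.disjoint.symm, union_comm A B ▸ h.union_eq,
    fun b hb a ha hab => h.not_adj a ha b hb hab.symm⟩

lemma disjoint_left (h : IsSeparation K S A B) : Disjoint A S :=
  subset_compl_iff_disjoint_right.1 (h.union_eq ▸ subset_union_left)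

lemma card_add (h : IsSeparation K S A B) : #A + #B + #S = Fintype.card V := by
  rw [← card_union_of_disjoint h.disjoint, h.union_eq, card_compl]
  have := card_le_univ S
  omega

lemma mem_union_of_adj (h : IsSeparation K S A B) {a b : V} (ha : a ∈ A) (hab : K.Adj a b) :
    b ∈ A ∪ S := by
  by_contra hb
  rw [mem_union, not_or] at hb
  have hbAB : b ∈ A ∪ B := h.union_eq ▸ mem_compl.2 hb.2
  exact h.not_adj a ha b ((mem_union.1 hbAB).resolve_left hb.1) hab

end IsSeparation

lemma exists_isSeparation_of_not_connected (K : SimpleGraph V) {S : Finset V}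
    (hS : #S < Fintype.card V) (h : ¬(K.induce (↑S : Set V)ᶜ).Connected) :
    ∃ A B, IsSeparation K S A B ∧ #A ≤ #B := by
  obtain ⟨v, -, hv⟩ := exists_mem_notMem_of_card_lt_card (t := univ) hS
  have hne : Nonempty ((↑S : Set V)ᶜ : Set V) := ⟨⟨v, hv⟩⟩
  obtain ⟨u, w, huw⟩ : ∃ u w, ¬(K.induce (↑S : Set V)ᶜ).Reachable u w := by
    by_contra! hr
    exact h ⟨hr⟩
  set A : Finset V := {x | ∃ hx : x ∉ S, (K.induce (↑S : Set V)ᶜ).Reachable u ⟨x, hx⟩}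
  have hsep : IsSeparation K S A (Sᶜ \ A) := by
    have hu : (u : V) ∉ S := u.2
    have hw : (w : V) ∉ S := w.2
    refine ⟨⟨u, by simp [A, hu]⟩, ⟨w, by simp [A, hw, huw]⟩, disjoint_sdiff, ?_, ?_⟩
    · exact union_sdiff_of_subset fun x hx => by
        obtain ⟨hxS, -⟩ := by simpa [A] using hx
        simpa using hxS
    · intro a ha b hb hab
      simp only [A, mem_sdiff, mem_compl, mem_filter, mem_univ, true_and, not_exists] at ha hb
      obtain ⟨ha, hua⟩ := ha
      exact hb.2 hb.1 (hua.trans (Adj.reachable (by simpa using hab)))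
  rcases le_total #A #(Sᶜ \ A) with h | h
  · exact ⟨_, _, hsep, h⟩
  · exact ⟨_, _, hsep.symm, h⟩

lemma IsSeparation.card_le_sq_div {G H : SimpleGraph V} {S A B : Finset V}
    (hsep : IsSeparation (G \ H) S A B) (hAB : #A ≤ #B) {d Δ : ℕ} {lam ε : ℝ}
    (hreg : G.IsRegularOfDegree d)
    (hlam : ∀ x : V → ℝ, ∑ v, x v = 0 → |x ⬝ᵥ G.adjMatrix ℝ *ᵥ x| ≤ lam * (x ⬝ᵥ x))
    (hH : ∀ v, H.degree v ≤ Δ) (hΔ : (Δ : ℝ) ≤ (d - lam) / 2 - ε) (hε : 0 < ε) (hS : #S < d) :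
    (#A : ℝ) ≤ d ^ 2 / ε := by
  have : Nonempty V := ⟨hsep.nonempty_left.choose⟩
  have hcross : #(G.interedges A B) ≤ #A * Δ :=
    calc #(G.interedges A B) ≤ #(H.interedges A B) := card_le_card fun p hp => by
          rw [mem_interedges_iff] at hp ⊢
          exact ⟨hp.1, hp.2.1, not_not.1 fun h => hsep.not_adj _ hp.1 _ hp.2.1 ⟨hp.2.2, h⟩⟩
      _ ≤ ∑ a ∈ A, H.degree a := H.card_interedges_le_sum_degree A B
      _ ≤ #A * Δ := by rw [← smul_eq_mul]; exact sum_le_card_nsmul _ _ _ fun a _ => hH a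
  have hcard : (#A + #B + #S : ℝ) = Fintype.card V := by exact_mod_cast hsep.card_add
  exact le_sq_div_of_abs_sub_le hε (Nat.cast_nonneg Δ) hΔ (Nat.cast_nonneg _)
    (by exact_mod_cast hS) (Nat.cast_nonneg _) (by exact_mod_cast hAB) hcard.symm
    (by exact_mod_cast hcross) (abs_card_interedges_sub_le hreg hlam A B)

end Separation

/-- there is d₀ > 0 so that for every ε > 0 and d₀ ≤ d ≤ n-1, every
(n,d,λ)-graph in which every U with |U| ≤ d + d²/ε spans at most |U| edges is such
that removing any H with Δ(H) ≤ (d-λ)/2 - ε leaves a (d - Δ(H))-vertex-connected graph. -/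
theorem stmt4 :
    ∃ d₀ : ℕ, 0 < d₀ ∧
      ∀ (V : Type) [Fintype V], ∀ (ε lam : ℝ) (d : ℕ) (G : SimpleGraph V),
        0 < ε → d₀ ≤ d → d ≤ Fintype.card V - 1 → IsNDL G d lam →
        (∀ U : Set V, (U.ncard : ℝ) ≤ (d : ℝ) + (d : ℝ) ^ 2 / ε →
          (edgesWithin G U : ℝ) ≤ (U.ncard : ℝ)) →
        ∀ H ≤ G, (maxDeg H : ℝ) ≤ ((d : ℝ) - lam) / 2 - ε →
          VertConnK (G \ H) (d - maxDeg H) := by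
  refine ⟨8, by norm_num, ?_⟩
  intro V _ ε lam d G hε hd hdn hG hdens H _ hΔ S hS
  have hreg := hG.1.isRegularOfDegree
  have hlam := hG.abs_dotProduct_adjMatrix_mulVec_le
  have : Nontrivial V := Fintype.one_lt_card_iff_nontrivial.1 (by omega)
  have hlam₀ : 0 ≤ lam := nonneg_of_abs_dotProduct_mulVec_le hlam
  have hδ : 4 ≤ d - maxDeg H := by
    have : 2 * maxDeg H ≤ d := by exact_mod_cast (by linarith : (2 * maxDeg H : ℝ) ≤ d)
    omega
  by_contra hcon
  obtain ⟨A, B, hsep, hAB⟩ := exists_isSeparation_of_not_connected (G \ H) (by omega) hcon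
  have hA := hsep.card_le_sq_div hAB hreg hlam (degree_le_maxDeg H) hΔ hε (by omega)
  obtain ⟨U, hUAS, hU⟩ := exists_card_lt_edgesWithin sdiff_le
    (hreg.sub_maxDeg_le_degree_sdiff H) hδ hsep.nonempty_left hsep.disjoint_left hS
    fun _ ha _ hab => hsep.mem_union_of_adj ha hab
  have hUcard : (#U : ℝ) ≤ #A + #S := by
    exact_mod_cast (card_le_card hUAS).trans (card_union_le A S)
  have hSd : (#S : ℝ) ≤ d := by exact_mod_cast hS.le.trans (Nat.sub_le _ _)
  have hsparse := hdens ↑U (by rw [Set.ncard_coe_finset]; linarith)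
  rw [Set.ncard_coe_finset] at hsparse
  exact hU.not_ge (by exact_mod_cast hsparse)
end

section
/- For every graph G = (V,E) on 2n vertices with maximum degree Δ(G) ≥ 3, there exists a partition V = V₁ ∪ V₂ with |V₁| = |V₂| = n such that the bipartite subgraph of G between V₁ and V₂ has minimum degree at least δ(G)/2 − 5√(Δ(G)·ln Δ(G)). -/
open SimpleGraph Real
open scoped Classical

variable {V : Type*}

/-!
Pair up the vertices by `e : V ≃ Fin n × Bool` and let an independent fair bit per pair decide
which of its two vertices goes into `S`, so that `|S| = n`. Among the neighbours of `v`, at least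
half of those that share their pair with `v` or with another neighbour cross the cut, whatever the
bits are, while each remaining neighbour crosses independently with probability `1/2`. Hoeffding's
inequality then bounds the probability that `v` has fewer than `δ/2 - t` crossing edges by
`2 Δ^(-50)`. This bad event only depends on the bits of the pairs meeting the closed neighbourhood
of `v`, hence shares variables with at most `2 (Δ + 1)^2` others, and the symmetric Lovász Local
Lemma, proved by counting over `Fin n → Bool`, yields a choice of bits avoiding all bad events.
-/

open Finset

section LovaszLocalLemma

variable {ι I α : Type*} [Fintype I] [DecidableEq I] [Fintype α]

theorem card_mul_card_eq_card_inter_mul {a : Finset I} {E F : Finset (I → α)}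
    (hE : DependsOn (· ∈ E) (a : Set I)) (hF : DependsOn (· ∈ F) (a : Set I)ᶜ) :
    #E * #F = #(E ∩ F) * Fintype.card (I → α) := by
  rw [← card_univ, ← card_product, ← card_product]
  refine card_nbij' (fun p => (a.piecewise p.1 p.2, a.piecewise p.2 p.1))
    (fun p => (a.piecewise p.1 p.2, a.piecewise p.2 p.1)) ?_ ?_ ?_ ?_
  · rintro ⟨ω, ω'⟩ hp
    simp only [coe_product, Set.mem_prod, mem_coe, mem_inter, mem_univ, and_true] at hp ⊢
    exact ⟨(eq_iff_iff.1 (hE (x := ω) fun i hi => by simp_all)).1 hp.1,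
      (eq_iff_iff.1 (hF (x := ω') fun i hi => by simp_all)).1 hp.2⟩
  · rintro ⟨ω, ω'⟩ hp
    simp only [coe_product, Set.mem_prod, mem_coe, mem_inter, mem_univ, and_true] at hp ⊢
    exact ⟨(eq_iff_iff.1 (hE (x := ω) fun i hi => by simp_all)).1 hp.1,
      (eq_iff_iff.1 (hF (x := ω) fun i hi => by simp_all)).1 hp.2⟩
  all_goals
    rintro ⟨ω, ω'⟩ -
    ext i <;> by_cases hi : i ∈ a <;> simp [hi]

noncomputable def avoiding (A : ι → Finset (I → α)) (s : Finset ι) : Finset (I → α) :=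
  {ω | ∀ k ∈ s, ω ∉ A k}

variable {A : ι → Finset (I → α)} {vbl : ι → Finset I}

theorem avoiding_insert (k : ι) (s : Finset ι) :
    avoiding A (insert k s) = avoiding A s \ A k := by
  ext ω; simp [avoiding]; tauto

theorem avoiding_anti {s t : Finset ι} (h : s ⊆ t) : avoiding A t ⊆ avoiding A s := by
  intro ω; simp only [avoiding, mem_filter, mem_univ, true_and]; exact fun hω k hk => hω k (h hk)

theorem dependsOn_mem_avoiding
    (hdet : ∀ k, DependsOn (· ∈ A k) (vbl k : Set I)) (s : Finset ι) :
    DependsOn (· ∈ avoiding A s) (⋃ k ∈ s, (vbl k : Set I)) := by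
  intro ω ω' h
  simp only [avoiding, mem_filter, mem_univ, true_and, eq_iff_iff]
  refine forall₂_congr fun k hk => not_congr (eq_iff_iff.1 (hdet k fun i hi => h i ?_))
  exact Set.mem_biUnion hk hi

theorem one_sub_mul_card_avoiding_le {x : ℝ} {k : ι} {s : Finset ι}
    (h : (#(A k ∩ avoiding A s) : ℝ) ≤ x * #(avoiding A s)) :
    (1 - x) * #(avoiding A s) ≤ #(avoiding A (insert k s)) := by
  have := card_sdiff_add_card_inter (avoiding A s) (A k)
  rw [avoiding_insert, inter_comm (A k)] at *
  have : (#(avoiding A s \ A k) : ℝ) + #(avoiding A s ∩ A k) = #(avoiding A s) := by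
    exact_mod_cast this
  linarith

theorem pow_mul_card_avoiding_le {x : ℝ} (hx1 : x ≤ 1) (t u : Finset ι)
    (h : ∀ w ⊆ u, ∀ k ∈ u \ w,
      (#(A k ∩ avoiding A (t ∪ w)) : ℝ) ≤ x * #(avoiding A (t ∪ w))) :
    (1 - x) ^ #u * #(avoiding A t) ≤ #(avoiding A (t ∪ u)) := by
  induction u using Finset.induction_on with
  | empty => simp
  | insert k u hk ih =>
    have ih' := ih fun w hw l hl => h w (hw.trans (subset_insert k u)) l
      (sdiff_subset_sdiff (subset_insert k u) le_rfl hl)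
    have step := one_sub_mul_card_avoiding_le (h u (subset_insert k u) k (by simp [hk]))
    rw [card_insert_of_notMem hk, pow_succ', mul_assoc, union_insert]
    exact (mul_le_mul_of_nonneg_left ih' (by linarith)).trans step

theorem card_inter_avoiding_mul_eq (hdet : ∀ k, DependsOn (· ∈ A k) (vbl k : Set I))
    {k : ι} {s : Finset ι} (hs : ∀ l ∈ s, Disjoint (vbl k) (vbl l)) :
    #(A k ∩ avoiding A s) * Fintype.card (I → α) = #(A k) * #(avoiding A s) := by
  refine (card_mul_card_eq_card_inter_mul (hdet k) ((dependsOn_mem_avoiding hdet s).mono ?_)).symm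
  exact Set.iUnion₂_subset fun l hl =>
    Set.subset_compl_iff_disjoint_left.2 (by exact_mod_cast hs l hl)

variable [Nonempty α] [Fintype ι] {x : ℝ} {D : ℕ}

-- The inductive claim of the local lemma: `P(A k ∣ no A l with l ∈ s) ≤ x`.
theorem card_inter_avoiding_le (hdet : ∀ k, DependsOn (· ∈ A k) (vbl k : Set I))
    (hx0 : 0 ≤ x) (hx1 : x ≤ 1)
    (hdeg : ∀ k, #{l | l ≠ k ∧ ¬Disjoint (vbl k) (vbl l)} ≤ D)
    (hp : ∀ k, (#(A k) : ℝ) ≤ x * (1 - x) ^ D * Fintype.card (I → α))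
    (s : Finset ι) {k : ι} (hk : k ∉ s) :
    (#(A k ∩ avoiding A s) : ℝ) ≤ x * #(avoiding A s) := by
  induction s using Finset.strongInduction generalizing k with
  | H s ih =>
  set near := {l ∈ s | ¬Disjoint (vbl k) (vbl l)}
  set far := s \ near
  have hs : far ∪ near = s := sdiff_union_of_subset (filter_subset _ s)
  have hindep : (#(A k ∩ avoiding A far) : ℝ) ≤ x * (1 - x) ^ D * #(avoiding A far) := by
    have h := card_inter_avoiding_mul_eq hdet (s := far) fun l hl => by
      simpa [far, near, (mem_sdiff.1 hl).1] using (mem_sdiff.1 hl).2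
    have hpos : (0 : ℝ) < Fintype.card (I → α) := by exact_mod_cast Fintype.card_pos
    rw [← mul_le_mul_iff_of_pos_right hpos]
    calc (#(A k ∩ avoiding A far) : ℝ) * Fintype.card (I → α)
          = #(A k) * #(avoiding A far) := by exact_mod_cast h
      _ ≤ _ := by nlinarith [hp k]
  have hnear : #near ≤ D := by
    refine (card_le_card fun l hl => ?_).trans (hdeg k)
    obtain ⟨hls, hl⟩ := mem_filter.1 hl
    exact mem_filter.2 ⟨mem_univ l, fun h => hk (h ▸ hls), hl⟩
  have hgrow : (1 - x) ^ #near * #(avoiding A far) ≤ #(avoiding A s) := by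
    refine hs ▸ pow_mul_card_avoiding_le hx1 far near fun w hw l hl => ?_
    have hl' : l ∉ far ∪ w := by
      simp only [far, mem_union, mem_sdiff, not_or, not_and, not_not]
      exact ⟨fun _ => (mem_sdiff.1 hl).1, (mem_sdiff.1 hl).2⟩
    have hsub : far ∪ w ⊆ s := union_subset sdiff_subset (hw.trans (filter_subset _ s))
    exact ih _ ((ssubset_iff_of_subset hsub).2
      ⟨l, (filter_subset _ s) (mem_sdiff.1 hl).1, hl'⟩) hl'
  calc (#(A k ∩ avoiding A s) : ℝ) ≤ #(A k ∩ avoiding A far) := by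
        gcongr; exact avoiding_anti (hs ▸ subset_union_left)
    _ ≤ x * (1 - x) ^ D * #(avoiding A far) := hindep
    _ ≤ x * ((1 - x) ^ #near * #(avoiding A far)) := by
        rw [mul_assoc]
        exact mul_le_mul_of_nonneg_left (mul_le_mul_of_nonneg_right
          (pow_le_pow_of_le_one (by linarith) (by linarith) hnear) (Nat.cast_nonneg _)) hx0
    _ ≤ x * #(avoiding A s) := by gcongr

theorem exists_forall_notMem_of_card_le (hdet : ∀ k, DependsOn (· ∈ A k) (vbl k : Set I))
    (hx0 : 0 ≤ x) (hx1 : x < 1)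
    (hdeg : ∀ k, #{l | l ≠ k ∧ ¬Disjoint (vbl k) (vbl l)} ≤ D)
    (hp : ∀ k, (#(A k) : ℝ) ≤ x * (1 - x) ^ D * Fintype.card (I → α)) :
    ∃ ω, ∀ k, ω ∉ A k := by
  have h := pow_mul_card_avoiding_le hx1.le ∅ univ fun w _ k hk =>
    card_inter_avoiding_le hdet hx0 hx1.le hdeg hp _ (by simpa using (mem_sdiff.1 hk).2)
  have hall : avoiding A ∅ = univ := by ext; simp [avoiding]
  rw [hall, empty_union, card_univ] at h
  have hpos : (0 : ℝ) < (1 - x) ^ #(univ : Finset ι) * Fintype.card (I → α) := by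
    have : 0 < Fintype.card (I → α) := Fintype.card_pos
    positivity
  obtain ⟨ω, hω⟩ := card_pos.1 (by exact_mod_cast hpos.trans_le h)
  exact ⟨ω, fun k => by simp only [avoiding, mem_filter] at hω; exact hω.2 k (mem_univ k)⟩

end LovaszLocalLemma

section Hoeffding

theorem one_add_exp_neg_le (l : ℝ) : 1 + exp (-l) ≤ 2 * exp (l ^ 2 / 8 - l / 2) := by
  calc 1 + exp (-l) = 2 * exp (-l / 2) * cosh (l / 2) := by
        rw [cosh_eq, mul_div_assoc', mul_add, mul_assoc, mul_assoc, ← exp_add, ← exp_add]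
        ring_nf; simp [add_comm]
    _ ≤ 2 * exp (-l / 2) * exp ((l / 2) ^ 2 / 2) := by gcongr; exact cosh_le_exp_half_sq _
    _ = 2 * exp (l ^ 2 / 8 - l / 2) := by rw [mul_assoc, ← exp_add]; ring_nf

variable {I : Type*} [Fintype I] [DecidableEq I]

theorem card_le_exp_of_nonneg (M : Finset I) (τ : I → Bool) (t : ℝ) {l : ℝ} (hl : 0 ≤ l) :
    (#{ω : I → Bool | (#{i ∈ M | ω i = τ i} : ℝ) ≤ #M / 2 - t} : ℝ) ≤
      2 ^ Fintype.card I * exp (#M * l ^ 2 / 8 - l * t) := by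
  set g : I → Bool → ℝ := fun i b => exp (-l * if i ∈ M ∧ b = τ i then 1 else 0)
  have hprod (ω : I → Bool) : ∏ i, g i (ω i) = exp (-l * #{i ∈ M | ω i = τ i}) := by
    rw [← exp_sum, ← mul_sum, sum_boole, ← filter_filter, filter_mem_eq_inter, univ_inter]
  have hsum (i : I) :
      ∑ b, g i b ≤ 2 * exp ((l ^ 2 / 8 - l / 2) * if i ∈ M then 1 else 0) := by
    by_cases hi : i ∈ M
    · cases h : τ i <;> simpa [g, hi, h, add_comm] using one_add_exp_neg_le l
    · simp [g, hi]
  calc (#{ω : I → Bool | (#{i ∈ M | ω i = τ i} : ℝ) ≤ #M / 2 - t} : ℝ)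
      ≤ ∑ ω : I → Bool, exp (l * (#M / 2 - t)) * ∏ i, g i (ω i) := by
        rw [card_eq_sum_ones, Nat.cast_sum, sum_filter]
        refine sum_le_sum fun ω _ => ?_
        split_ifs with h
        · rw [hprod, ← exp_add, Nat.cast_one, one_le_exp_iff]; nlinarith
        · positivity
    _ = exp (l * (#M / 2 - t)) * ∏ i, ∑ b, g i b := by rw [← mul_sum, Fintype.prod_sum]
    _ ≤ exp (l * (#M / 2 - t)) *
          ∏ i, 2 * exp ((l ^ 2 / 8 - l / 2) * if i ∈ M then 1 else 0) := by
        gcongr with i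
        exact hsum i
    _ = 2 ^ Fintype.card I * exp (#M * l ^ 2 / 8 - l * t) := by
        rw [prod_mul_distrib, prod_const, ← exp_sum, ← mul_sum, sum_boole, card_univ,
          mul_left_comm, ← exp_add, filter_mem_eq_inter, univ_inter]
        ring_nf

theorem card_le_exp {κ : Type*} (U : Finset κ) {p : κ → I} (hp : Set.InjOn p U)
    (τ : κ → Bool) {t m : ℝ} (ht : 0 ≤ t) (hm : 0 < m) (hUm : (#U : ℝ) ≤ m) :
    (#{ω : I → Bool | (#{u ∈ U | ω (p u) = τ u} : ℝ) ≤ #U / 2 - t} : ℝ) ≤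
      2 ^ Fintype.card I * exp (-2 * t ^ 2 / m) := by
  set τ' : I → Bool := fun i => decide (∃ u ∈ U, p u = i ∧ τ u = true)
  have hτ' {u} (hu : u ∈ U) : τ' (p u) = τ u := by
    have : (∃ u' ∈ U, p u' = p u ∧ τ u' = true) ↔ τ u = true :=
      ⟨fun ⟨u', hu', hpu, h⟩ => hp hu' hu hpu ▸ h, fun h => ⟨u, hu, rfl, h⟩⟩
    simp only [τ', this, Bool.decide_eq_true]
  have hcount (ω : I → Bool) :
      #{u ∈ U | ω (p u) = τ u} = #{i ∈ U.image p | ω i = τ' i} := by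
    rw [filter_image, card_image_of_injOn (hp.mono (filter_subset _ _))]
    exact congrArg card (filter_congr fun u hu => by rw [hτ' hu])
  have hcard : #(U.image p) = #U := card_image_of_injOn hp
  calc (#{ω : I → Bool | (#{u ∈ U | ω (p u) = τ u} : ℝ) ≤ #U / 2 - t} : ℝ)
      = #{ω : I → Bool |
          (#{i ∈ U.image p | ω i = τ' i} : ℝ) ≤ #(U.image p) / 2 - t} := by
        simp_rw [hcount, hcard]
    _ ≤ 2 ^ Fintype.card I * exp (#(U.image p) * (4 * t / m) ^ 2 / 8 - 4 * t / m * t) :=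
        card_le_exp_of_nonneg _ τ' t (by positivity)
    _ ≤ 2 ^ Fintype.card I * exp (-2 * t ^ 2 / m) := by
        gcongr
        rw [hcard, div_pow, mul_div_assoc', le_div_iff₀ hm]
        field_simp
        nlinarith [sq_nonneg t]

end Hoeffding

section Degrees

variable (H : SimpleGraph V)

theorem degN_eq_card_neighborFinset [Fintype V] (v : V) : degN H v = #(H.neighborFinset v) := by
  rw [degN, ← Set.ncard_coe_finset, coe_neighborFinset]

theorem degN_le_maxDeg [Finite V] (v : V) : degN H v ≤ maxDeg H :=
  le_csSup (Set.finite_range _).bddAbove ⟨v, rfl⟩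

theorem minDeg_le_degN (v : V) : minDeg H ≤ degN H v := Nat.sInf_le ⟨v, rfl⟩

theorem exists_degN_eq_minDeg [Nonempty V] : ∃ v, degN H v = minDeg H :=
  Nat.sInf_mem (Set.range_nonempty _)

theorem nonempty_of_maxDeg_ne_zero (h : maxDeg H ≠ 0) : Nonempty V := by
  by_contra hV
  simp [maxDeg, Set.range_eq_empty_iff.2 (not_nonempty_iff.1 hV)] at h

theorem degN_bipartiteBetween [Fintype V] (S : Set V) (v : V) :
    degN (bipartiteBetween H S) v = #{u ∈ H.neighborFinset v | u ∈ S ↔ v ∉ S} := by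
  rw [degN, ← Set.ncard_coe_finset]
  congr 1
  ext u
  simp [bipartiteBetween]
  tauto

theorem degN_bipartiteBetween_congr [Fintype V] {S S' : Set V} {v : V}
    (h : ∀ u ∈ insert v (H.neighborFinset v), u ∈ S ↔ u ∈ S') :
    degN (bipartiteBetween H S) v = degN (bipartiteBetween H S') v := by
  rw [degN_bipartiteBetween, degN_bipartiteBetween]
  refine congrArg card (filter_congr fun u hu => ?_)
  rw [h u (mem_insert_of_mem hu), h v (mem_insert_self _ _)]

theorem card_not_disjoint_image_le [Fintype V] {I : Type*} [DecidableEq I] (p : V → I) {Δ : ℕ}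
    (hp : ∀ i, #{u | p u = i} ≤ 2) (hΔ : ∀ u, #(H.neighborFinset u) ≤ Δ) (v : V) :
    #{l | ¬Disjoint ((insert v (H.neighborFinset v)).image p)
      ((insert l (H.neighborFinset l)).image p)} ≤ 2 * (Δ + 1) ^ 2 := by
  have hsub : ({l | ¬Disjoint ((insert v (H.neighborFinset v)).image p)
      ((insert l (H.neighborFinset l)).image p)} : Finset V) ⊆
      (insert v (H.neighborFinset v)).biUnion fun w =>
        ({u | p u = p w} : Finset V).biUnion fun z => insert z (H.neighborFinset z) := by
    intro l hl
    simp only [mem_filter, mem_univ, true_and, not_disjoint_iff, mem_image] at hl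
    obtain ⟨_, ⟨w, hw, rfl⟩, z, hz, hpz⟩ := hl
    simp only [mem_biUnion, mem_filter, mem_univ, true_and]
    refine ⟨w, hw, z, hpz, ?_⟩
    simp only [mem_insert, mem_neighborFinset] at hz ⊢
    exact hz.imp Eq.symm SimpleGraph.Adj.symm
  have hclosed (u : V) : #(insert u (H.neighborFinset u)) ≤ Δ + 1 :=
    (card_insert_le _ _).trans (Nat.add_le_add_right (hΔ u) 1)
  calc _ ≤ _ := card_le_card hsub
    _ ≤ #(insert v (H.neighborFinset v)) * (2 * (Δ + 1)) :=
        card_biUnion_le_card_mul _ _ _ fun w _ =>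
          (card_biUnion_le_card_mul _ _ _ fun z _ => hclosed z).trans
            (Nat.mul_le_mul_right _ (hp _))
    _ ≤ (Δ + 1) * (2 * (Δ + 1)) := Nat.mul_le_mul_right _ (hclosed v)
    _ = 2 * (Δ + 1) ^ 2 := by ring

end Degrees

section Splitting

variable {I : Type*}

def SplitsFibers (p : V → I) (S : Set V) : Prop :=
  ∀ ⦃a b⦄, a ≠ b → p a = p b → (a ∈ S ↔ b ∉ S)

noncomputable def soloMembers (p : V → I) (v : V) (N : Finset V) : Finset V :=
  {u ∈ N | p u ≠ p v ∧ ∀ w ∈ N, p w = p u → w = u}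

theorem injOn_soloMembers (p : V → I) (v : V) (N : Finset V) :
    Set.InjOn p (soloMembers p v N) := fun a ha b hb hab => by
  simp only [soloMembers, coe_filter, Set.mem_ofPred_eq] at ha hb
  exact (ha.2.2 b hb.1 hab.symm).symm

theorem soloMembers_subset (p : V → I) (v : V) (N : Finset V) : soloMembers p v N ⊆ N :=
  filter_subset _ _

/-- A non-crossing member of `N` outside `soloMembers` shares its fibre with a crossing one,
so at least half of the members outside `soloMembers` cross. -/
theorem card_add_two_mul_card_filter_le {p : V → I} {S : Set V} (hS : SplitsFibers p S)
    {N : Finset V} {v : V} (hv : v ∉ N) :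
    #N + 2 * #{u ∈ soloMembers p v N | u ∈ S ↔ v ∉ S} ≤
      2 * #{u ∈ N | u ∈ S ↔ v ∉ S} + #(soloMembers p v N) := by
  set U := soloMembers p v N
  have hU : U ⊆ N := soloMembers_subset p v N
  have hmatch :
      #{u ∈ N \ U | ¬(u ∈ S ↔ v ∉ S)} ≤ #{u ∈ N \ U | u ∈ S ↔ v ∉ S} := by
    refine card_le_card_of_forall_subsingleton (fun u w => p u = p w) (fun u hu => ?_) ?_
    · simp only [mem_filter, mem_sdiff, U, soloMembers, not_and, not_forall] at hu
      obtain ⟨⟨huN, hsolo⟩, hcross⟩ := hu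
      by_cases hpv : p u = p v
      · exact absurd (hS (ne_of_mem_of_not_mem huN hv) hpv) hcross
      obtain ⟨w, hwN, hpw, hwu⟩ := hsolo huN hpv
      refine ⟨w, ?_, hpw.symm⟩
      simp only [mem_filter, mem_sdiff, U, soloMembers, not_and, not_forall]
      have := hS hwu hpw
      exact ⟨⟨hwN, fun _ _ => ⟨u, huN, hpw.symm, Ne.symm hwu⟩⟩, by tauto⟩
    · intro w _ a ha b hb
      simp only [Set.mem_ofPred_eq, mem_filter] at ha hb
      by_contra hab
      have := hS hab (ha.2.trans hb.2.symm)
      tauto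
  have h1 := card_filter_add_card_filter_not (s := N \ U) (fun u => u ∈ S ↔ v ∉ S)
  have h2 : #{u ∈ N | u ∈ S ↔ v ∉ S} =
      #{u ∈ U | u ∈ S ↔ v ∉ S} + #{u ∈ N \ U | u ∈ S ↔ v ∉ S} := by
    conv_lhs => rw [← union_sdiff_of_subset hU, filter_union,
      card_union_of_disjoint (disjoint_filter_filter disjoint_sdiff)]
  have h3 := card_sdiff_add_card_eq_card hU
  omega

end Splitting

theorem two_mul_exp_le_of_three_le {Δ : ℕ} (hΔ : 3 ≤ Δ) :
    2 * exp (-2 * (5 * √(Δ * log Δ)) ^ 2 / Δ) ≤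
      1 / (4 * (Δ + 1) ^ 2) * (1 - 1 / (4 * (Δ + 1) ^ 2)) ^ (2 * (Δ + 1) ^ 2) := by
  have hΔ' : (3 : ℝ) ≤ Δ := by exact_mod_cast hΔ
  set x : ℝ := 1 / (4 * (Δ + 1) ^ 2)
  have hx1 : x ≤ 1 := by
    rw [div_le_one (by positivity)]; nlinarith
  have hexp : exp (-2 * (5 * √(Δ * log Δ)) ^ 2 / Δ) = 1 / (Δ : ℝ) ^ 50 := by
    rw [mul_pow, sq_sqrt (by positivity), one_div,
      ← exp_log (by positivity : (0 : ℝ) < Δ ^ 50), ← exp_neg, log_pow]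
    congr 1
    field_simp
    ring
  have hbern : 1 / 2 ≤ (1 - x) ^ (2 * (Δ + 1) ^ 2) := by
    have h := one_add_mul_le_pow (a := -x) (by linarith) (2 * (Δ + 1) ^ 2)
    have : ((2 * (Δ + 1) ^ 2 : ℕ) : ℝ) * x = 1 / 2 := by
      simp only [x]; push_cast; field_simp; ring
    simp only [mul_neg, this, ← sub_eq_add_neg] at h
    linarith
  have hpow : 16 * ((Δ : ℝ) + 1) ^ 2 ≤ (Δ : ℝ) ^ 50 := by
    calc (16 : ℝ) * (Δ + 1) ^ 2 ≤ Δ ^ 3 * (Δ ^ 2) ^ 2 := by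
          gcongr
          · nlinarith [pow_le_pow_left₀ (by norm_num) hΔ' 3]
          · nlinarith
      _ = (Δ : ℝ) ^ 7 := by ring
      _ ≤ Δ ^ 50 := pow_le_pow_right₀ (by linarith) (by norm_num)
  rw [hexp]
  calc 2 * (1 / (Δ : ℝ) ^ 50) ≤ x * (1 / 2) := by
        simp only [x]
        rw [div_mul_div_comm, mul_one_div, div_le_div_iff₀ (by positivity) (by positivity)]
        nlinarith
    _ ≤ x * (1 - x) ^ (2 * (Δ + 1) ^ 2) := by gcongr

section PairSplit

variable {n : ℕ} (e : V ≃ Fin n × Bool)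

/-- `ω i` chooses which member of the pair `e.symm (i, ·)` lies in the set. -/
def pairSplit (ω : Fin n → Bool) : Set V := {v | ω (e v).1 = (e v).2}

theorem ncard_pairSplit (ω : Fin n → Bool) : (pairSplit e ω).ncard = n := by
  have : pairSplit e ω = e ⁻¹' Set.range fun i => (i, ω i) := by
    ext v; simp [pairSplit, Prod.ext_iff, eq_comm]
  rw [this, Set.ncard_preimage_of_injective_subset_range e.injective (by simp),
    Set.ncard_range_of_injective fun i j h => congrArg Prod.fst h, Nat.card_eq_fintype_card,
    Fintype.card_fin]

theorem splitsFibers_pairSplit (ω : Fin n → Bool) :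
    SplitsFibers (fun v => (e v).1) (pairSplit e ω) := by
  intro a b hab hp
  have : (e a).2 ≠ (e b).2 := fun h => hab (e.injective (Prod.ext hp h))
  simp only [pairSplit, Set.mem_ofPred_eq, hp]
  revert this
  generalize ω (e b).1 = x, (e a).2 = y, (e b).2 = z
  revert x y z
  decide

theorem card_fiber_le_two [Fintype V] (i : Fin n) : #{v | (e v).1 = i} ≤ 2 := by
  calc #{v | (e v).1 = i} ≤ #{e.symm (i, false), e.symm (i, true)} := card_le_card fun v hv => by
          have : e v = (i, (e v).2) := Prod.ext (mem_filter.1 hv).2 rfl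
          simp only [mem_insert, mem_singleton, Equiv.eq_symm_apply]
          rw [this]
          cases (e v).2 <;> simp
    _ ≤ 2 := card_le_two

theorem card_degN_bipartiteBetween_lt_le [Fintype V] (G : SimpleGraph V) (v : V) {r t m : ℝ}
    (ht : 0 ≤ t) (hm : 0 < m) (hr : r + t ≤ #(G.neighborFinset v) / 2)
    (hdeg : (#(G.neighborFinset v) : ℝ) ≤ m) :
    (#{ω : Fin n → Bool | (degN (bipartiteBetween G (pairSplit e ω)) v : ℝ) < r} : ℝ) ≤
      2 * (2 ^ n * exp (-2 * t ^ 2 / m)) := by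
  set p : V → Fin n := fun u => (e u).1
  set N := G.neighborFinset v
  set U := soloMembers p v N
  -- once `ω (p v)` is fixed, whether `u ∈ U` crosses depends on `ω (p u)` alone
  set τ : Bool → V → Bool := fun c u => xor (e u).2 (c == (e v).2)
  have hcross (ω : Fin n → Bool) (u : V) :
      (u ∈ pairSplit e ω ↔ v ∉ pairSplit e ω) ↔ ω (p u) = τ (ω (p v)) u := by
    simp only [pairSplit, Set.mem_ofPred_eq, τ, p]
    generalize ω (e u).1 = x, ω (e v).1 = y, (e u).2 = z, (e v).2 = w
    revert x y z w
    decide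
  set few : Bool → Finset (Fin n → Bool) :=
    fun c => {ω | (#{u ∈ U | ω (p u) = τ c u} : ℝ) ≤ #U / 2 - t}
  have hbad : ({ω | (degN (bipartiteBetween G (pairSplit e ω)) v : ℝ) < r} : Finset _) ⊆
      univ.biUnion few := by
    intro ω hω
    simp only [few, mem_biUnion, mem_univ, true_and, mem_filter] at hω ⊢
    refine ⟨ω (p v), ?_⟩
    have hlow := card_add_two_mul_card_filter_le (splitsFibers_pairSplit e ω)
      (G.notMem_neighborFinset_self v)
    rw [filter_congr fun u _ => hcross ω u] at hlow
    rw [degN_bipartiteBetween] at hω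
    have : (#N : ℝ) + 2 * #{u ∈ U | ω (p u) = τ (ω (p v)) u} ≤
        2 * #{u ∈ N | u ∈ pairSplit e ω ↔ v ∉ pairSplit e ω} + #U := by
      exact_mod_cast hlow
    linarith
  have hU : (#U : ℝ) ≤ m :=
    le_trans (by exact_mod_cast card_le_card (soloMembers_subset p v N)) hdeg
  calc _ ≤ ∑ c, (#(few c) : ℝ) := by exact_mod_cast (card_le_card hbad).trans card_biUnion_le
    _ ≤ ∑ c : Bool, 2 ^ n * exp (-2 * t ^ 2 / m) := by
        gcongr with c
        simpa using card_le_exp U (injOn_soloMembers p v N) (τ c) ht hm hU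
    _ = 2 * (2 ^ n * exp (-2 * t ^ 2 / m)) := by simp

theorem dependsOn_degN_bipartiteBetween_pairSplit [Fintype V] (G : SimpleGraph V) (v : V) :
    DependsOn (fun ω => degN (bipartiteBetween G (pairSplit e ω)) v)
      ((insert v (G.neighborFinset v)).image fun u => (e u).1 : Set (Fin n)) :=
  fun ω ω' h => degN_bipartiteBetween_congr G fun u hu => by
    simp [pairSplit, h (e u).1 (mem_image_of_mem _ hu)]

theorem card_degN_bipartiteBetween_lt_le_of_three_le [Fintype V] (G : SimpleGraph V) {Δ : ℕ}
    (hΔ : 3 ≤ Δ) (hdeg : ∀ u, #(G.neighborFinset u) ≤ Δ) (v : V) :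
    (#{ω : Fin n → Bool | (degN (bipartiteBetween G (pairSplit e ω)) v : ℝ) <
        minDeg G / 2 - 5 * √(Δ * log Δ)} : ℝ) ≤
      1 / (4 * (Δ + 1) ^ 2) * (1 - 1 / (4 * (Δ + 1) ^ 2)) ^ (2 * (Δ + 1) ^ 2) *
        Fintype.card (Fin n → Bool) := by
  have hδ : (minDeg G : ℝ) ≤ #(G.neighborFinset v) := by
    exact_mod_cast degN_eq_card_neighborFinset G v ▸ minDeg_le_degN G v
  calc _ ≤ 2 * (2 ^ n * exp (-2 * (5 * √(Δ * log Δ)) ^ 2 / Δ)) :=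
        card_degN_bipartiteBetween_lt_le e G v (by positivity) (by simp; omega) (by linarith)
          (by exact_mod_cast hdeg v)
    _ = 2 * exp (-2 * (5 * √(Δ * log Δ)) ^ 2 / Δ) * 2 ^ n := by ring
    _ ≤ _ := by
        rw [Fintype.card_fun, Fintype.card_bool, Fintype.card_fin, Nat.cast_pow, Nat.cast_ofNat]
        exact mul_le_mul_of_nonneg_right (two_mul_exp_le_of_three_le hΔ) (by positivity)

end PairSplit

/-- every graph on 2n vertices with Δ(G) ≥ 3 admits an equipartition
V = V₁ ∪ V₂ with the bipartite subgraph between the parts having minimum degree at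
least δ(G)/2 - 5√(Δ(G) ln Δ(G)). -/
theorem stmt5 {V : Type*} [Fintype V] (G : SimpleGraph V) (n : ℕ)
    (hcard : Fintype.card V = 2 * n) (hDelta : 3 ≤ maxDeg G) :
    ∃ S : Set V, S.ncard = n ∧
      (minDeg G : ℝ) / 2 - 5 * Real.sqrt ((maxDeg G : ℝ) * Real.log (maxDeg G)) ≤
        (minDeg (bipartiteBetween G S) : ℝ) := by
  obtain ⟨e⟩ : Nonempty (V ≃ Fin n × Bool) := Fintype.card_eq.1 (by simp [hcard, mul_comm])
  have : Nonempty V := nonempty_of_maxDeg_ne_zero G (by omega)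
  set Δ := maxDeg G
  have hΔ (u : V) : #(G.neighborFinset u) ≤ Δ :=
    degN_eq_card_neighborFinset G u ▸ degN_le_maxDeg G u
  set A : V → Finset (Fin n → Bool) := fun v =>
    {ω | (degN (bipartiteBetween G (pairSplit e ω)) v : ℝ) <
      minDeg G / 2 - 5 * √(Δ * log Δ)}
  have hA (v : V) : DependsOn (· ∈ A v)
      ((insert v (G.neighborFinset v)).image fun u => (e u).1 : Set (Fin n)) := fun ω ω' h => by
    simp only [A, mem_filter, mem_univ, true_and,
      dependsOn_degN_bipartiteBetween_pairSplit e G v h]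
  obtain ⟨ω, hω⟩ := exists_forall_notMem_of_card_le hA (by positivity)
    (by rw [div_lt_one (by positivity)]; nlinarith [(Nat.cast_nonneg Δ : (0 : ℝ) ≤ Δ)])
    (fun v => (card_le_card fun l hl => mem_filter.2 ⟨mem_univ l, (mem_filter.1 hl).2.2⟩).trans
      (card_not_disjoint_image_le G _ (card_fiber_le_two e) hΔ v))
    (card_degN_bipartiteBetween_lt_le_of_three_le e G hDelta hΔ)
  refine ⟨pairSplit e ω, ncard_pairSplit e ω, ?_⟩
  obtain ⟨v, hv⟩ := exists_degN_eq_minDeg (bipartiteBetween G (pairSplit e ω))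
  simpa [A, ← hv] using hω v
end
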